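/- For G = ℤ/2, the group cohomology H⁵(ℤ/2; U(1)) ≅ ℤ/2, and the pullback along the quotient map ℤ/4 → ℤ/2 annihilates H⁵(ℤ/2; U(1)); i.e., the nontrivial degree-5 class of ℤ/2 is trivialized by the extension 1 → ℤ/2 → ℤ/4 → ℤ/2 → 1. -/

import Mathlib

/-- The circle group `U(1) = ℝ/ℤ`. -/
abbrev UOne : Type := AddCircle (1 : ℝ)

/-- Inhomogeneous `n`-cochains on `G` with coefficients in the trivial `G`-module `M`. -/
abbrev cochain (G : Type) [Group G] (M : Type) [AddCommGroup M] (n : ℕ) : Type :=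
  (Fin n → G) → M

/-- The inhomogeneous differential for group cohomology with trivial coefficients. -/
def dFun (G : Type) [Group G] (M : Type) [AddCommGroup M] (n : ℕ)
    (c : cochain G M n) : cochain G M (n + 1) :=
  fun g => c (fun i => g i.succ) +
    ∑ j : Fin (n + 1), ((-1 : ℤ) ^ ((j : ℕ) + 1)) • c (Fin.contractNth j (· * ·) g)

/-- The differential as an additive homomorphism. -/
def dHom (G : Type) [Group G] (M : Type) [AddCommGroup M] (n : ℕ) :
    cochain G M n →+ cochain G M (n + 1) :=
  AddMonoidHom.mk' (dFun G M n) (by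
    intro a b
    funext g
    simp only [dFun, Pi.add_apply, smul_add, Finset.sum_add_distrib]
    abel)

/-- Group cohomology `H^{n+1}(G; M)` with trivial coefficients, defined as
(n+1)-cocycles modulo coboundaries. -/
abbrev groupCohSucc (G : Type) [Group G] (M : Type) [AddCommGroup M] (n : ℕ) : Type :=
  (dHom G M (n + 1)).ker ⧸
    AddSubgroup.comap (dHom G M (n + 1)).ker.subtype (dHom G M n).range

/-- Precomposition of cochains with a group homomorphism. -/
def cochainComp {H G : Type} [Group H] [Group G] (φ : H →* G)
    (M : Type) [AddCommGroup M] (n : ℕ) : cochain G M n →+ cochain H M n :=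
  AddMonoidHom.mk' (fun c => fun x => c (φ ∘ x)) (fun _ _ => rfl)

lemma comp_contractNth {H G : Type} [Group H] [Group G] (φ : H →* G) {n : ℕ}
    (j : Fin (n + 1)) (g : Fin (n + 1) → H) :
    φ ∘ Fin.contractNth j (· * ·) g = Fin.contractNth j (· * ·) (φ ∘ g) := by
  funext i
  simp only [Function.comp_apply, Fin.contractNth]
  split_ifs <;> simp [map_mul]

lemma dFun_comp {H G : Type} [Group H] [Group G] (φ : H →* G)
    (M : Type) [AddCommGroup M] (n : ℕ) (c : cochain G M n) :
    dFun H M n (cochainComp φ M n c) = cochainComp φ M (n + 1) (dFun G M n c) := by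
  funext g
  simp only [dFun, cochainComp, AddMonoidHom.mk'_apply, comp_contractNth]
  rfl

/-- The induced map on cocycles. -/
def cocycleComp {H G : Type} [Group H] [Group G] (φ : H →* G)
    (M : Type) [AddCommGroup M] (n : ℕ) :
    (dHom G M (n + 1)).ker →+ (dHom H M (n + 1)).ker :=
  AddMonoidHom.codRestrict
    ((cochainComp φ M (n + 1)).comp (dHom G M (n + 1)).ker.subtype) _
    (by
      rintro ⟨c, hc⟩
      have hc' : dFun G M (n + 1) c = 0 := hc
      simp only [AddMonoidHom.mem_ker, AddMonoidHom.comp_apply, AddSubgroup.coe_subtype]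
      show dFun H M (n + 1) (cochainComp φ M (n + 1) c) = 0
      rw [dFun_comp, hc']
      rfl)

/-- The map induced on group cohomology `H^{n+1}` by a group homomorphism. -/
def cohMapSucc {H G : Type} [Group H] [Group G] (φ : H →* G)
    (M : Type) [AddCommGroup M] (n : ℕ) :
    groupCohSucc G M n →+ groupCohSucc H M n :=
  QuotientAddGroup.map _ _ (cocycleComp φ M n) (by
    rintro ⟨c, hc⟩ hmem
    obtain ⟨b, hb⟩ := hmem
    refine ⟨cochainComp φ M n b, ?_⟩
    show dFun H M n (cochainComp φ M n b) = cochainComp φ M (n + 1) c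
    rw [dFun_comp]
    exact congrArg (cochainComp φ M (n + 1)) hb)

/-- The canonical reduction homomorphism between cyclic groups `ℤ/b → ℤ/a` for `a ∣ b`,
written multiplicatively. -/
def redHom (a b : ℕ) (h : a ∣ b) : Multiplicative (ZMod b) →* Multiplicative (ZMod a) :=
  AddMonoidHom.toMultiplicative (ZMod.castHom h (ZMod a)).toAddMonoidHom

/-!
For trivial coefficients `dFun` is the differential of Mathlib's complex of inhomogeneous
cochains, so for the cyclic group `ℤ/2` the odd-degree cohomology is the kernel of the norm map
`x ↦ 2 • x`, i.e. the `2`-torsion `½ℤ/ℤ ≅ ℤ/2` of `U(1)`.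

The nonzero class is `ω = x ∪ βx ∪ βx` (`x` the identity class, `βx` its Bockstein), which is the
indicator of the tuple `(t, t, t, t, t)`, `t` the generator, with value `½`. It is detected by pairing cochains with
the cycle `∑ ε(g₀) ε(g₂) ε(g₄) [g₀|g₁|g₂|g₃|g₄]`, `ε` the sign character: every face of the
differential is invariant under multiplying two adjacent entries (or one outer entry) by `t`,
an involution which flips the sign of the weight, so the pairing kills coboundaries.

Along `ℤ/4 → ℤ/2` the Bockstein `βx` becomes the coboundary `δs` of the high bit `s`, so the
pullback of `ω` is `x ∪ δs ∪ δs = δ(x ∪ s ∪ δs)` modulo `2`.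
-/

open CategoryTheory groupCohomology

lemma dFun_comp_addMonoidHom {G M N : Type} [Group G] [AddCommGroup M] [AddCommGroup N]
    (φ : M →+ N) (n : ℕ) (c : cochain G M n) :
    dFun G N n (φ ∘ c) = φ ∘ dFun G M n c := by
  funext g
  simp only [dFun, Function.comp_apply, map_add, map_sum, map_zsmul]

lemma groupCohSucc_mk_eq_zero_iff {G M : Type} [Group G] [AddCommGroup M] {n : ℕ}
    (z : (dHom G M (n + 1)).ker) :
    (QuotientAddGroup.mk z : groupCohSucc G M n) = 0 ↔ ∃ b, dFun G M n b = z := by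
  rw [QuotientAddGroup.eq_zero_iff]
  rfl

section Comparison

variable (G M : Type) [Group G] [AddCommGroup M] (n : ℕ)

lemma inhomogeneousCochains_trivial_d_apply (f : cochain G M n) :
    ((inhomogeneousCochains (Rep.trivial ℤ G M)).d n (n + 1)).hom f = dFun G M n f := by
  funext g
  simp [dFun, inhomogeneousCochains.d]

noncomputable abbrev trivialCochainsSc : ShortComplex (ModuleCat ℤ) :=
  (inhomogeneousCochains (Rep.trivial ℤ G M)).sc' n (n + 1) (n + 1 + 1)

lemma ker_trivialCochainsSc_g :
    (LinearMap.ker (trivialCochainsSc G M n).g.hom).toAddSubgroup = (dHom G M (n + 1)).ker := by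
  ext f
  exact iff_of_eq (congrArg (· = 0) (inhomogeneousCochains_trivial_d_apply G M (n + 1) f))

noncomputable def groupCohSuccAddEquiv :
    groupCohSucc G M n ≃+ groupCohomology (Rep.trivial ℤ G M) (n + 1) :=
  let S := trivialCochainsSc G M n
  (QuotientAddGroup.congr _ (LinearMap.range S.moduleCatToCycles).toAddSubgroup
    (AddEquiv.addSubgroupCongr (ker_trivialCochainsSc_g G M n).symm) (by
      ext z
      constructor
      · rintro ⟨_, ⟨b, hb⟩, rfl⟩
        exact ⟨b, Subtype.ext ((inhomogeneousCochains_trivial_d_apply G M n b).trans hb)⟩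
      · rintro ⟨b, hb⟩
        have hbz : dFun G M n b = z.1 :=
          (inhomogeneousCochains_trivial_d_apply G M n b).symm.trans (congrArg Subtype.val hb)
        exact ⟨⟨z.1, ker_trivialCochainsSc_g G M n ▸ z.2⟩, ⟨b, hbz⟩, rfl⟩)).trans
  (((inhomogeneousCochains (Rep.trivial ℤ G M)).homologyIsoSc' n (n + 1) (n + 1 + 1)
      (by simp) (by simp) ≪≫ S.moduleCatHomologyIso).toLinearEquiv.toAddEquiv.symm)

end Comparison

section FiniteCyclic

variable (M : Type) [AddCommGroup M]

lemma Rep.trivial_norm_hom_apply {G : Type} [Group G] [Fintype G] (x : M) :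
    (Rep.trivial ℤ G M).norm.hom x = Fintype.card G • x := by
  rw [Rep.norm_apply, Representation.norm, LinearMap.sum_apply]
  simp

lemma Rep.trivial_applyAsHom {G : Type} [CommMonoid G] (g : G) :
    Rep.applyAsHom (Rep.trivial ℤ G M) g = 𝟙 (Rep.trivial ℤ G M) := by
  ext y
  rfl

noncomputable def groupCohomologyTrivialOddAddEquiv {G : Type} [CommGroup G] [Fintype G] (g : G)
    (hg : ∀ x, x ∈ Subgroup.zpowers g) (i : ℕ) (hi : Odd i) :
    groupCohomology (Rep.trivial ℤ G M) i ≃+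
      (nsmulAddMonoidHom (Fintype.card G) : M →+ M).ker :=
  let S := Rep.FiniteCyclicGroup.subCompNormHom (Rep.trivial ℤ G M) g
  ((Rep.FiniteCyclicGroup.groupCohomologyIsoOdd (Rep.trivial ℤ G M) g hg i hi ≪≫
    S.moduleCatHomologyIso).toLinearEquiv.toAddEquiv.trans
    (Submodule.quotEquivOfEqBot _ (by
      rw [LinearMap.range_eq_bot]
      ext x
      show (Rep.applyAsHom (Rep.trivial ℤ G M) g - 𝟙 (Rep.trivial ℤ G M)).hom x = 0
      rw [Rep.trivial_applyAsHom, sub_self]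
      rfl)).toAddEquiv).trans
    (AddEquiv.addSubgroupCongr (G := M) (H := (LinearMap.ker S.g.hom).toAddSubgroup) (by
      ext x
      exact iff_of_eq (congrArg (· = 0) (Rep.trivial_norm_hom_apply (G := G) M x))))

end FiniteCyclic

noncomputable def ZMod.toAddCircleTorsionEquiv (N : ℕ) [NeZero N] :
    ZMod N ≃+ (nsmulAddMonoidHom N : UnitAddCircle →+ UnitAddCircle).ker :=
  AddEquiv.ofBijective
    (ZMod.toAddCircle.codRestrict _ fun j => by
      rw [AddMonoidHom.mem_ker, nsmulAddMonoidHom_apply, ← map_nsmul, nsmul_eq_mul,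
        ZMod.natCast_self, zero_mul, map_zero])
    ⟨fun _ _ h => ZMod.toAddCircle_injective N (congrArg Subtype.val h), fun ⟨u, hu⟩ => by
      obtain ⟨m, -, rfl⟩ := (AddCircle.nsmul_eq_zero_iff (NeZero.pos N)).1 hu
      exact ⟨m, Subtype.ext (by simp [ZMod.toAddCircle_natCast])⟩⟩

lemma sum_smul_eq_zero_of_mul_involution {A M : Type} [Monoid A] [Fintype A] [AddCommGroup M]
    (W : A → ℤ) (F : A → M) (u : A) (hu : u * u = 1) (hW : ∀ a, W (a * u) = -W a)
    (hF : ∀ a, F (a * u) = F a) : ∑ a, W a • F a = 0 := by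
  refine Finset.sum_involution (fun a _ => a * u) (fun a _ => ?_) (fun a _ hne hfix => ?_)
    (fun _ _ => Finset.mem_univ _) (fun a _ => by rw [mul_assoc, hu, mul_one])
  · rw [hW, hF, neg_smul, add_neg_cancel]
  · have hW0 : W a = 0 := by have := hW a; rw [hfix] at this; omega
    exact hne (by rw [hW0, zero_smul])

def cycleWeight {G : Type} (w : G → ℤ) (g : Fin 5 → G) : ℤ := w (g 0) * w (g 2) * w (g 4)

def weightedSum {G M : Type} [Group G] [Fintype G] [AddCommGroup M] (w : G → ℤ)
    (f : cochain G M 5) : M :=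
  ∑ g, cycleWeight w g • f g

theorem weightedSum_dFun {G M : Type} [CommGroup G] [Fintype G] [AddCommGroup M] {s : G}
    (hs : s * s = 1) {w : G → ℤ} (hw : ∀ g, w (g * s) = -w g) (b : cochain G M 4) :
    weightedSum w (dFun G M 4 b) = 0 := by
  have face_sum_eq_zero (π : (Fin 5 → G) → (Fin 4 → G)) (u : Fin 5 → G) (hu : u * u = 1)
      (hW : ∀ g, cycleWeight w (g * u) = -cycleWeight w g) (hπ : ∀ g, π (g * u) = π g) :
      ∑ g, cycleWeight w g • b (π g) = 0 :=
    sum_smul_eq_zero_of_mul_involution _ (b ∘ π) u hu hW fun g => congrArg b (hπ g)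
  simp only [weightedSum, dFun, smul_add, Finset.smul_sum, Finset.sum_add_distrib]
  rw [Finset.sum_comm]
  simp only [smul_comm _ ((-1 : ℤ) ^ _), ← Finset.smul_sum]
  rw [Fin.sum_univ_five, face_sum_eq_zero (fun g i => g i.succ) ![s, 1, 1, 1, 1],
    face_sum_eq_zero (Fin.contractNth 0 (· * ·)) ![s, s, 1, 1, 1],
    face_sum_eq_zero (Fin.contractNth 1 (· * ·)) ![1, s, s, 1, 1],
    face_sum_eq_zero (Fin.contractNth 2 (· * ·)) ![1, 1, s, s, 1],
    face_sum_eq_zero (Fin.contractNth 3 (· * ·)) ![1, 1, 1, s, s],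
    face_sum_eq_zero (Fin.contractNth 4 (· * ·)) ![1, 1, 1, 1, s]]
  · simp
  all_goals first
    | (funext i; fin_cases i <;> simp [hs])
    | (intro g; simp [cycleWeight, hw]; done)
    | (intro g; funext i
       fin_cases i <;> simp [Fin.contractNth] <;> rw [mul_mul_mul_comm, hs, mul_one])

/-- `x ∪ βx ∪ βx` with `ℤ/2` coefficients: as `βx (a, b) = x a * x b`, it is the indicator of the
constant tuple at the generator. -/
def omegaMod2 : cochain (Multiplicative (ZMod 2)) (ZMod 2) 5 := fun g =>
  if g = fun _ => Multiplicative.ofAdd 1 then 1 else 0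

lemma dFun_omegaMod2 : dFun _ _ 5 omegaMod2 = 0 := by decide

noncomputable def omegaCircle : cochain (Multiplicative (ZMod 2)) UOne 5 :=
  ZMod.toAddCircle ∘ omegaMod2

lemma omegaCircle_mem_ker : omegaCircle ∈ (dHom _ UOne 5).ker := by
  show dFun _ _ 5 (ZMod.toAddCircle ∘ omegaMod2) = 0
  rw [dFun_comp_addMonoidHom, dFun_omegaMod2]
  exact funext fun _ => map_zero _

noncomputable def omegaClass : groupCohSucc (Multiplicative (ZMod 2)) UOne 4 :=
  QuotientAddGroup.mk ⟨omegaCircle, omegaCircle_mem_ker⟩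

def signChar (g : Multiplicative (ZMod 2)) : ℤ := if g = 1 then 1 else -1

lemma weightedSum_omegaCircle :
    weightedSum signChar omegaCircle = -ZMod.toAddCircle (1 : ZMod 2) := by
  have hweight : cycleWeight signChar (fun _ => Multiplicative.ofAdd 1) = -1 := by decide
  simp only [weightedSum, omegaCircle, omegaMod2, Function.comp_apply, apply_ite ZMod.toAddCircle,
    map_zero, smul_ite, smul_zero, Finset.sum_ite_eq', Finset.mem_univ, if_true, hweight,
    neg_one_smul]

lemma omegaClass_ne_zero : omegaClass ≠ 0 := by
  intro h
  obtain ⟨b, hb⟩ := (groupCohSucc_mk_eq_zero_iff _).1 h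
  have := weightedSum_dFun (s := Multiplicative.ofAdd 1) (by decide) (w := signChar) (by decide) b
  rw [hb, weightedSum_omegaCircle, neg_eq_zero, ZMod.toAddCircle_eq_zero] at this
  exact one_ne_zero this

def lowBit (a : Multiplicative (ZMod 4)) : ZMod 2 := (Multiplicative.toAdd a).cast

def highBit (a : Multiplicative (ZMod 4)) : ZMod 2 := ((Multiplicative.toAdd a).val / 2 : ℕ)

/-- `x ∪ s ∪ δs` for the high bit `s`, using `δs (a, b) = x a * x b` modulo `2`. -/
def omegaPrimitive : cochain (Multiplicative (ZMod 4)) (ZMod 2) 4 := fun g =>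
  lowBit (g 0) * highBit (g 1) * lowBit (g 2) * lowBit (g 3)

set_option maxRecDepth 10000 in
lemma dFun_omegaPrimitive :
    dFun _ _ 4 omegaPrimitive = fun g => omegaMod2 (redHom 2 4 (by norm_num) ∘ g) := by
  decide

lemma cohMapSucc_omegaClass (h : 2 ∣ 4) : cohMapSucc (redHom 2 4 h) UOne 4 omegaClass = 0 := by
  refine (groupCohSucc_mk_eq_zero_iff _).2 ⟨ZMod.toAddCircle ∘ omegaPrimitive, ?_⟩
  rw [dFun_comp_addMonoidHom, dFun_omegaPrimitive]
  rfl

lemma mem_zpowers_ofAdd_one (g : Multiplicative (ZMod 2)) :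
    g ∈ Subgroup.zpowers (Multiplicative.ofAdd 1) := by
  obtain rfl | rfl : g = 1 ∨ g = Multiplicative.ofAdd 1 := by revert g; decide
  exacts [Subgroup.one_mem _, Subgroup.mem_zpowers _]

noncomputable def groupCohSuccFourZMod2AddEquiv :
    groupCohSucc (Multiplicative (ZMod 2)) UOne 4 ≃+ ZMod 2 :=
  (groupCohSuccAddEquiv _ _ 4).trans <|
    (groupCohomologyTrivialOddAddEquiv UOne _ mem_zpowers_ofAdd_one 5 (by decide)).trans
      (ZMod.toAddCircleTorsionEquiv 2).symm

/-- `H⁵(ℤ/2; U(1)) ≅ ℤ/2`, and the pullback along the quotient map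
`ℤ/4 → ℤ/2` annihilates all of `H⁵(ℤ/2; U(1))`. -/
theorem statement_11 :
    Nonempty (groupCohSucc (Multiplicative (ZMod 2)) UOne 4 ≃+ ZMod 2) ∧
    ∀ α : groupCohSucc (Multiplicative (ZMod 2)) UOne 4,
      cohMapSucc (redHom 2 4 (by norm_num)) UOne 4 α = 0 := by
  have hcard : Nat.card (groupCohSucc (Multiplicative (ZMod 2)) UOne 4) = 2 :=
    (Nat.card_congr groupCohSuccFourZMod2AddEquiv.toEquiv).trans (Nat.card_zmod 2)
  obtain ⟨y, -, hy⟩ := (Nat.card_eq_two_iff' 0).1 hcard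
  refine ⟨⟨groupCohSuccFourZMod2AddEquiv⟩, fun α => ?_⟩
  rcases eq_or_ne α 0 with rfl | hα
  · exact map_zero _
  · rw [hy α hα, ← hy _ omegaClass_ne_zero]
    exact cohMapSucc_omegaClass _
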